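/- Fix d ≥ 1, a nonzero vector μ ∈ ℝ^d, σ > 0, p ∈ (1/2, 1), and t > 2; set q = 1 − 1/t. Let D_p be the distribution on ℝ^d × {−1,+1} where Y is uniform on {−1,+1}, X given Y=+1 is N(μ, σ²I), and X given Y=−1 is the mixture p·N(−μ, σ²I) + (1−p)·N(3μ, σ²I). Let h^LDA_q be the classifier that outputs +1 iff ‖x − μ‖ ≤ ‖x + (4q−3)μ‖ (the ideal LDA classifier built with mixture weight q instead of p). Then, with ν = ‖μ‖/σ, 2·Pr_{(X,Y)∼D_p}[h^LDA_q(X) ≠ Y] = Φ(−(1 − 2/t)ν) + p·Φ(−(1 + 2/t)ν) + (1−p)·Φ((3 − 2/t)ν). -/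

import Mathlib

/-!
Writing `c = 4q − 3`, the rule `‖x − μ‖ ≤ ‖x + cμ‖` is the half-space `⟪x, μ⟫ ≥ 2(1 − q)‖μ‖²`,
because `1 + c > 0` when `q > 1/2`. Since its density factors over the coordinates, `N(m, σ²I)`
is the image of the standard Gaussian under `x ↦ m + σx`, so `⟪X, w⟫` is `N(⟪m, w⟫, σ²‖w‖²)`
and each of the three mixture components falls on the wrong side of the half-space with
probability a value of `Φ`; these values are weighted by `1/2`, `p/2` and `(1 − p)/2`.
-/

open MeasureTheory Real Set ProbabilityTheory
open scoped ENNReal RealInnerProductSpace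

/-- The standard normal cumulative distribution function
`Φ(z) = ∫_{−∞}^z (1/√(2π)) e^{−u²/2} du`. -/
noncomputable def stdNormCDF (z : ℝ) : ℝ :=
  ∫ u in Set.Iic z, (1 / Real.sqrt (2 * Real.pi)) * Real.exp (-u ^ 2 / 2)
/-- Density of the `d`-dimensional Gaussian `N(m, σ²I)`:
`f(x; m, σ²I) = (2πσ²)^{−d/2} exp(−‖x−m‖²/(2σ²))`. -/
noncomputable def gaussPdf (d : ℕ) (m : EuclideanSpace ℝ (Fin d)) (σ : ℝ)
    (x : EuclideanSpace ℝ (Fin d)) : ℝ :=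
  (2 * Real.pi * σ ^ 2) ^ (-(d : ℝ) / 2) * Real.exp (-‖x - m‖ ^ 2 / (2 * σ ^ 2))

/-- The `d`-dimensional Gaussian measure `N(m, σ²I)` on `ℝ^d`. -/
noncomputable def gauss (d : ℕ) (m : EuclideanSpace ℝ (Fin d)) (σ : ℝ) :
    Measure (EuclideanSpace ℝ (Fin d)) :=
  volume.withDensity fun x => ENNReal.ofReal (gaussPdf d m σ x)
/-- The data-generating distribution `D` on `ℝ^d × {−1,+1}` (labels embedded in `ℝ`):
`Y` is uniform on `{−1,+1}`, `X | Y=+1 ∼ N(μ, σ²I)`, and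
`X | Y=−1 ∼ p·N(−μ, σ²I) + (1−p)·N(3μ, σ²I)`. -/
noncomputable def Dmix (d : ℕ) (μv : EuclideanSpace ℝ (Fin d)) (σ p : ℝ) :
    Measure (EuclideanSpace ℝ (Fin d) × ℝ) :=
  ENNReal.ofReal (1 / 2) • (gauss d μv σ).map (fun x => (x, (1 : ℝ)))
    + ENNReal.ofReal (p / 2) • (gauss d (-μv) σ).map (fun x => (x, (-1 : ℝ)))
    + ENNReal.ofReal ((1 - p) / 2) • (gauss d ((3 : ℝ) • μv) σ).map (fun x => (x, (-1 : ℝ)))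
/-- The LDA classifier with centers `μ` and `μ₋ = −(4p−3)μ`: outputs `+1`
iff `‖x − μ‖ ≤ ‖x − μ₋‖`. -/
noncomputable def hLDA (d : ℕ) (μv : EuclideanSpace ℝ (Fin d)) (p : ℝ)
    (x : EuclideanSpace ℝ (Fin d)) : ℝ :=
  if ‖x - μv‖ ≤ ‖x - (-(4 * p - 3)) • μv‖ then 1 else -1

theorem stdNormCDF_nonneg (z : ℝ) : 0 ≤ stdNormCDF z :=
  setIntegral_nonneg measurableSet_Iic fun _ _ => by positivity

theorem MeasureTheory.Measure.pi_withDensity_ofReal {ι : Type*} [Fintype ι] {α : ι → Type*}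
    [∀ i, MeasurableSpace (α i)] (μ : ∀ i, Measure (α i)) [∀ i, SigmaFinite (μ i)]
    {f : ∀ i, α i → ℝ} (hf : ∀ i, Integrable (f i) (μ i)) (hf₀ : ∀ i x, 0 ≤ f i x) :
    haveI := fun i => isFiniteMeasure_withDensity_ofReal (hf i).hasFiniteIntegral
    Measure.pi (fun i => (μ i).withDensity fun x => ENNReal.ofReal (f i x)) =
      (Measure.pi μ).withDensity fun x => ENNReal.ofReal (∏ i, f i (x i)) := by
  refine Measure.pi_eq fun s hs => ?_
  have hint : Integrable (fun x : ∀ i, α i => ∏ i, f i (x i)) (Measure.pi μ) :=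
    Integrable.fintype_prod_dep hf
  rw [withDensity_apply _ (MeasurableSet.univ_pi hs),
    ← ofReal_integral_eq_lintegral_ofReal hint.integrableOn
      (ae_of_all _ fun x => Finset.prod_nonneg fun i _ => hf₀ i _),
    Measure.restrict_pi_pi, integral_fintype_prod_eq_prod,
    ENNReal.ofReal_prod_of_nonneg fun i _ => setIntegral_nonneg_of_ae ?_]
  · refine Finset.prod_congr rfl fun i _ => ?_
    rw [withDensity_apply _ (hs i), ofReal_integral_eq_lintegral_ofReal (hf i).integrableOn
      (ae_of_all _ (hf₀ i))]
  · exact ae_of_all _ (hf₀ i)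

theorem MeasureTheory.MeasurePreserving.map_withDensity {α β : Type*} [MeasurableSpace α]
    [MeasurableSpace β] {μ : Measure α} {ν : Measure β} {e : α ≃ᵐ β}
    (he : MeasurePreserving e μ ν) (g : α → ℝ≥0∞) :
    (μ.withDensity g).map e = ν.withDensity (g ∘ e.symm) := by
  ext s hs
  rw [Measure.map_apply e.measurable hs, withDensity_apply _ (e.measurable hs),
    withDensity_apply _ hs, ← he.setLIntegral_comp_preimage_emb e.measurableEmbedding]
  simp

theorem gaussianReal_Iic_eq_stdNormCDF (z : ℝ) :
    gaussianReal 0 1 (Iic z) = ENNReal.ofReal (stdNormCDF z) := by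
  rw [gaussianReal_apply_eq_integral _ one_ne_zero, stdNormCDF]
  congr 1
  refine setIntegral_congr_fun measurableSet_Iic fun u _ => ?_
  simp [gaussianPDFReal]

theorem gaussianReal_Iio_eq_stdNormCDF (z : ℝ) :
    gaussianReal 0 1 (Iio z) = ENNReal.ofReal (stdNormCDF z) := by
  have := nullSingletonClass_gaussianReal (μ := 0) one_ne_zero
  rw [measure_congr Iio_ae_eq_Iic, gaussianReal_Iic_eq_stdNormCDF]

theorem gaussianReal_zero_one_map_affine (a σ : ℝ) :
    (gaussianReal 0 1).map (fun z => a + σ * z) = gaussianReal a (σ ^ 2).toNNReal := by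
  have hcomp : (fun z => a + σ * z) = (a + ·) ∘ (σ * ·) := rfl
  rw [hcomp, ← Measure.map_map (measurable_const_add a) (measurable_const_mul σ),
    gaussianReal_map_const_mul, gaussianReal_map_const_add]
  congr 1
  · ring
  · ext
    simp [sq_nonneg]

theorem ProbabilityTheory.stdGaussian_map_inner_of_norm_eq_one {E : Type*}
    [NormedAddCommGroup E] [InnerProductSpace ℝ E] [FiniteDimensional ℝ E] [MeasurableSpace E]
    [BorelSpace E] {u : E} (hu : ‖u‖ = 1) :
    (stdGaussian E).map (fun x => ⟪u, x⟫) = gaussianReal 0 1 := by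
  have h := IsGaussian.map_eq_gaussianReal (μ := stdGaussian E) (innerSL ℝ u)
  rw [integral_strongDual_stdGaussian, variance_dual_stdGaussian, innerSL_apply_norm, hu] at h
  simpa using h

section Gauss

variable {d : ℕ}

theorem gaussPdf_toLp (m : EuclideanSpace ℝ (Fin d)) (σ : ℝ) (x : Fin d → ℝ) :
    gaussPdf d m σ (WithLp.toLp 2 x) = ∏ i, gaussianPDFReal (m i) (σ ^ 2).toNNReal (x i) := by
  have hnorm : ‖WithLp.toLp 2 x - m‖ ^ 2 = ∑ i, (x i - m i) ^ 2 := by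
    simp [EuclideanSpace.real_norm_sq_eq]
  have hconst : (2 * π * σ ^ 2) ^ (-((d : ℝ) / 2)) = (√(2 * π * σ ^ 2))⁻¹ ^ d := by
    rw [sqrt_eq_rpow, ← rpow_neg (by positivity), ← rpow_mul_natCast (by positivity)]
    ring_nf
  simp only [gaussPdf, gaussianPDFReal, Real.coe_toNNReal _ (sq_nonneg σ),
    Finset.prod_mul_distrib, Finset.prod_const, Finset.card_univ, Fintype.card_fin, ← exp_sum,
    hnorm, hconst, Finset.sum_div, Finset.sum_neg_distrib, neg_div]

theorem gauss_eq_map_pi (m : EuclideanSpace ℝ (Fin d)) {σ : ℝ} (hσ : σ ≠ 0) :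
    gauss d m σ =
      (Measure.pi fun i => gaussianReal (m i) (σ ^ 2).toNNReal).map (WithLp.toLp 2) := by
  have hv : (σ ^ 2).toNNReal ≠ 0 := (Real.toNNReal_pos.2 (by positivity)).ne'
  simp_rw [gaussianReal_of_var_ne_zero _ hv, gaussianPDF_def]
  rw [Measure.pi_withDensity_ofReal _ (fun i => integrable_gaussianPDFReal _ _)
      (fun i => gaussianPDFReal_nonneg _ _), ← volume_pi,
    ← MeasurableEquiv.coe_toLp,
    MeasurePreserving.map_withDensity (e := MeasurableEquiv.toLp 2 (Fin d → ℝ))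
      (EuclideanSpace.volume_preserving_symm_measurableEquiv_toLp (Fin d)).symm, gauss]
  congr 1 with x
  rw [Function.comp_apply, ← gaussPdf_toLp]
  simp

theorem gauss_eq_map_stdGaussian (m : EuclideanSpace ℝ (Fin d)) {σ : ℝ} (hσ : σ ≠ 0) :
    gauss d m σ = (stdGaussian (EuclideanSpace ℝ (Fin d))).map (fun x => m + σ • x) := by
  rw [gauss_eq_map_pi m hσ, ← map_pi_eq_stdGaussian, Measure.map_map (by fun_prop) (by fun_prop)]
  simp_rw [← gaussianReal_zero_one_map_affine]
  rw [← Measure.pi_map_pi (fun i => by fun_prop), Measure.map_map (by fun_prop) (by fun_prop)]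
  rfl

theorem gauss_map_inner (m : EuclideanSpace ℝ (Fin d)) {σ : ℝ} (hσ : σ ≠ 0)
    {w : EuclideanSpace ℝ (Fin d)} (hw : w ≠ 0) :
    (gauss d m σ).map (fun x => ⟪x, w⟫) =
      (gaussianReal 0 1).map (fun z => ⟪m, w⟫ + σ * ‖w‖ * z) := by
  have hu : ‖‖w‖⁻¹ • w‖ = 1 := norm_smul_inv_norm hw
  have hcomp : (fun x => ⟪x, w⟫) ∘ (fun x => m + σ • x) =
      (fun z => ⟪m, w⟫ + σ * ‖w‖ * z) ∘ (fun x => ⟪‖w‖⁻¹ • w, x⟫) := by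
    ext x
    have hw' : ‖w‖ ≠ 0 := norm_ne_zero_iff.2 hw
    simp only [Function.comp_apply, inner_add_left, real_inner_smul_left, real_inner_comm x w]
    field_simp
  rw [gauss_eq_map_stdGaussian m hσ, Measure.map_map (by fun_prop) (by fun_prop), hcomp,
    ← Measure.map_map (by fun_prop) (by fun_prop), stdGaussian_map_inner_of_norm_eq_one hu]

theorem gauss_setOf_inner_le (m : EuclideanSpace ℝ (Fin d)) {σ : ℝ} (hσ : 0 < σ)
    {w : EuclideanSpace ℝ (Fin d)} (hw : w ≠ 0) (θ : ℝ) :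
    gauss d m σ {x | ⟪x, w⟫ ≤ θ} = ENNReal.ofReal (stdNormCDF ((θ - ⟪m, w⟫) / (σ * ‖w‖))) := by
  have hs : 0 < σ * ‖w‖ := mul_pos hσ (norm_pos_iff.2 hw)
  have hpre : (fun z => ⟪m, w⟫ + σ * ‖w‖ * z) ⁻¹' Iic θ = Iic ((θ - ⟪m, w⟫) / (σ * ‖w‖)) := by
    ext z
    simp only [mem_preimage, mem_Iic, le_div_iff₀ hs]
    constructor <;> intro <;> linarith
  rw [← gaussianReal_Iic_eq_stdNormCDF, ← hpre, ← Measure.map_apply (by fun_prop) measurableSet_Iic,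
    ← gauss_map_inner m hσ.ne' hw, Measure.map_apply (by fun_prop) measurableSet_Iic]
  rfl

theorem gauss_setOf_inner_lt (m : EuclideanSpace ℝ (Fin d)) {σ : ℝ} (hσ : 0 < σ)
    {w : EuclideanSpace ℝ (Fin d)} (hw : w ≠ 0) (θ : ℝ) :
    gauss d m σ {x | ⟪x, w⟫ < θ} = ENNReal.ofReal (stdNormCDF ((θ - ⟪m, w⟫) / (σ * ‖w‖))) := by
  have hs : 0 < σ * ‖w‖ := mul_pos hσ (norm_pos_iff.2 hw)
  have hpre : (fun z => ⟪m, w⟫ + σ * ‖w‖ * z) ⁻¹' Iio θ = Iio ((θ - ⟪m, w⟫) / (σ * ‖w‖)) := by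
    ext z
    simp only [mem_preimage, mem_Iio, lt_div_iff₀ hs]
    constructor <;> intro <;> linarith
  rw [← gaussianReal_Iio_eq_stdNormCDF, ← hpre, ← Measure.map_apply (by fun_prop) measurableSet_Iio,
    ← gauss_map_inner m hσ.ne' hw, Measure.map_apply (by fun_prop) measurableSet_Iio]
  rfl

end Gauss

section LDA

variable {d : ℕ}

theorem norm_sub_le_norm_add_smul_iff {E : Type*} [NormedAddCommGroup E] [InnerProductSpace ℝ E]
    (x μ : E) {c : ℝ} (hc : -1 < c) :
    ‖x - μ‖ ≤ ‖x + c • μ‖ ↔ (1 - c) / 2 * ‖μ‖ ^ 2 ≤ ⟪x, μ⟫ := by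
  rw [← sq_le_sq₀ (norm_nonneg _) (norm_nonneg _), norm_sub_sq_real, norm_add_sq_real,
    real_inner_smul_right, norm_smul, mul_pow, norm_eq_abs, sq_abs]
  have h1c : 0 < 1 + c := by linarith
  constructor <;> intro h <;> nlinarith [sq_nonneg ‖μ‖]

theorem hLDA_eq_ite (μv x : EuclideanSpace ℝ (Fin d)) {q : ℝ} (hq : 1 / 2 < q) :
    hLDA d μv q x = if 2 * (1 - q) * ‖μv‖ ^ 2 ≤ ⟪x, μv⟫ then 1 else -1 := by
  have h := norm_sub_le_norm_add_smul_iff x μv (c := 4 * q - 3) (by linarith)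
  rw [show (1 - (4 * q - 3)) / 2 = 2 * (1 - q) by ring, ← neg_neg ((4 * q - 3) • μv),
    ← neg_smul, ← sub_eq_add_neg] at h
  simp only [hLDA, h]

theorem setOf_hLDA_ne_one (μv : EuclideanSpace ℝ (Fin d)) {q : ℝ} (hq : 1 / 2 < q) :
    {x | hLDA d μv q x ≠ 1} = {x | ⟪x, μv⟫ < 2 * (1 - q) * ‖μv‖ ^ 2} := by
  ext x
  simp only [mem_ofPred_eq, hLDA_eq_ite μv x hq, ← not_le]
  split_ifs with h <;> norm_num [h]

theorem setOf_hLDA_ne_neg_one (μv : EuclideanSpace ℝ (Fin d)) {q : ℝ} (hq : 1 / 2 < q) :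
    {x | hLDA d μv q x ≠ -1} = {x | ⟪x, -μv⟫ ≤ -(2 * (1 - q) * ‖μv‖ ^ 2)} := by
  ext x
  simp only [mem_ofPred_eq, hLDA_eq_ite μv x hq, inner_neg_right, neg_le_neg_iff]
  split_ifs with h <;> norm_num [h]

theorem measurable_hLDA (μv : EuclideanSpace ℝ (Fin d)) (q : ℝ) : Measurable (hLDA d μv q) :=
  Measurable.ite (measurableSet_le (by fun_prop) (by fun_prop)) measurable_const measurable_const

theorem Dmix_setOf_ne (μv : EuclideanSpace ℝ (Fin d)) (σ p : ℝ)
    {h : EuclideanSpace ℝ (Fin d) → ℝ} (hh : Measurable h) :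
    Dmix d μv σ p {z | h z.1 ≠ z.2} =
      ENNReal.ofReal (1 / 2) * gauss d μv σ {x | h x ≠ 1}
        + ENNReal.ofReal (p / 2) * gauss d (-μv) σ {x | h x ≠ -1}
        + ENNReal.ofReal ((1 - p) / 2) * gauss d ((3 : ℝ) • μv) σ {x | h x ≠ -1} := by
  have hS : MeasurableSet {z : EuclideanSpace ℝ (Fin d) × ℝ | h z.1 ≠ z.2} :=
    (measurableSet_eq_fun (hh.comp measurable_fst) measurable_snd).compl
  simp only [Dmix, Measure.add_apply, Measure.smul_apply, smul_eq_mul]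
  rw [Measure.map_apply (by fun_prop) hS, Measure.map_apply (by fun_prop) hS,
    Measure.map_apply (by fun_prop) hS]
  rfl

theorem Dmix_setOf_hLDA_ne {μv : EuclideanSpace ℝ (Fin d)} (hμ : μv ≠ 0) {σ : ℝ} (hσ : 0 < σ)
    (p : ℝ) {q : ℝ} (hq : 1 / 2 < q) :
    Dmix d μv σ p {z | hLDA d μv q z.1 ≠ z.2} =
      ENNReal.ofReal (1 / 2) * ENNReal.ofReal (stdNormCDF ((1 - 2 * q) * (‖μv‖ / σ)))
        + ENNReal.ofReal (p / 2) * ENNReal.ofReal (stdNormCDF (-(3 - 2 * q) * (‖μv‖ / σ)))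
        + ENNReal.ofReal ((1 - p) / 2)
          * ENNReal.ofReal (stdNormCDF ((1 + 2 * q) * (‖μv‖ / σ))) := by
  have hn : ‖μv‖ ≠ 0 := norm_ne_zero_iff.2 hμ
  rw [Dmix_setOf_ne μv σ p (measurable_hLDA μv q), setOf_hLDA_ne_one μv hq,
    setOf_hLDA_ne_neg_one μv hq, gauss_setOf_inner_lt _ hσ hμ,
    gauss_setOf_inner_le _ hσ (neg_ne_zero.2 hμ), gauss_setOf_inner_le _ hσ (neg_ne_zero.2 hμ)]
  simp only [inner_neg_left, inner_neg_right, neg_neg, real_inner_smul_left,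
    real_inner_self_eq_norm_sq, norm_neg]
  congr 4 <;> field_simp <;> ring_nf

end LDA

theorem lda_error_train_q_test_p_general (d : ℕ)
    (μv : EuclideanSpace ℝ (Fin d)) (hμ : μv ≠ 0) (σ p t q : ℝ) (hσ : 0 < σ)
    (hp1 : 1 / 2 < p) (hp2 : p < 1) (ht : 2 < t) (hq : q = 1 - 1 / t) :
    2 * ((Dmix d μv σ p) {z | hLDA d μv q z.1 ≠ z.2}).toReal =
      stdNormCDF (-(1 - 2 / t) * (‖μv‖ / σ))
        + p * stdNormCDF (-(1 + 2 / t) * (‖μv‖ / σ))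
        + (1 - p) * stdNormCDF ((3 - 2 / t) * (‖μv‖ / σ)) := by
  have hq' : 1 / 2 < q := by
    have := one_div_lt_one_div_of_lt two_pos ht
    linarith
  rw [Dmix_setOf_hLDA_ne hμ hσ p hq', ENNReal.toReal_add (by finiteness) (by finiteness),
    ENNReal.toReal_add (by finiteness) (by finiteness)]
  simp only [ENNReal.toReal_mul, ENNReal.toReal_ofReal (stdNormCDF_nonneg _),
    ENNReal.toReal_ofReal (by norm_num : (0 : ℝ) ≤ 1 / 2),
    ENNReal.toReal_ofReal (by linarith : 0 ≤ p / 2),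
    ENNReal.toReal_ofReal (by linarith : 0 ≤ (1 - p) / 2), hq]
  ring_nf

/-- Error of the ideal LDA classifier built with mixture weight `q = 1 − 1/t`
but evaluated on the distribution `D_p` (training on the shortened-tail
distribution, testing on the original one). -/
theorem lda_error_train_q_test_p (d : ℕ) (hd : 1 ≤ d)
    (μv : EuclideanSpace ℝ (Fin d)) (hμ : μv ≠ 0) (σ p t q : ℝ) (hσ : 0 < σ)
    (hp1 : 1 / 2 < p) (hp2 : p < 1) (ht : 2 < t) (hq : q = 1 - 1 / t) :
    2 * ((Dmix d μv σ p) {z | hLDA d μv q z.1 ≠ z.2}).toReal =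
      stdNormCDF (-(1 - 2 / t) * (‖μv‖ / σ))
        + p * stdNormCDF (-(1 + 2 / t) * (‖μv‖ / σ))
        + (1 - p) * stdNormCDF ((3 - 2 / t) * (‖μv‖ / σ)) :=
  lda_error_train_q_test_p_general d μv hμ σ p t q hσ hp1 hp2 ht hq
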